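/- arXiv:2507.11073 — 5 statements merged into one kernel-verified Lean document; each statement's English description precedes it below -/
import Mathlib

section
/- Let A be a commutative ring, let ϖ ∈ A be a non-zero-divisor, let f_1, …, f_r ∈ A, and let C be the A-subalgebra of the localization A[ϖ^{-1}] generated by the elements f_1/ϖ, …, f_r/ϖ. Let B be a commutative A-algebra such that the image of ϖ in B is a non-zero-divisor and such that the image of each f_i in B lies in ϖ·B. Then there exists exactly one A-algebra homomorphism C → B. -/
/-- Universal property of the affine blow-up algebra `C = A[f 1/ϖ, …, f r/ϖ] ⊆ A[ϖ⁻¹]`: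
if `B` is an `A`-algebra in which the image of `ϖ` is a non-zero-divisor and the image of
every `f i` lies in `ϖ·B`, then there is exactly one `A`-algebra homomorphism `C → B`. -/
theorem blowupAlgebra_universal_property
    {A : Type*} [CommRing A] (ϖ : A) (hϖ : ϖ ∈ nonZeroDivisors A)
    {r : ℕ} (f : Fin r → A)
    (B : Type*) [CommRing B] [Algebra A B]
    (hB : algebraMap A B ϖ ∈ nonZeroDivisors B)
    (hf : ∀ i, algebraMap A B (f i) ∈ Ideal.span {algebraMap A B ϖ}) :
    ∃! _ : (Algebra.adjoin A
        (Set.range fun i => algebraMap A (Localization.Away ϖ) (f i) *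
          Ring.inverse (algebraMap A (Localization.Away ϖ) ϖ)) →ₐ[A] B), True := by
  classical
  set L := Localization.Away ϖ
  set gen : Fin r → L := fun i => algebraMap A L (f i) *
      Ring.inverse (algebraMap A L ϖ) with hgen
  set S : Set L := Set.range gen with hS
  set C := Algebra.adjoin A S with hC
  -- the image of ϖ in L is a unit
  have huL : IsUnit (algebraMap A L ϖ) :=
    IsLocalization.map_units L (⟨ϖ, Submonoid.mem_powers ϖ⟩ : Submonoid.powers ϖ)
  have hinv : algebraMap A L ϖ * Ring.inverse (algebraMap A L ϖ) = 1 :=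
    Ring.mul_inverse_cancel _ huL
  -- localization of B away from the image of ϖ
  set ϖB : B := algebraMap A B ϖ with hϖB
  set B' := Localization.Away ϖB with hB'
  set j : B →ₐ[A] B' := IsScalarTower.toAlgHom A B B' with hj
  have hjinj : Function.Injective j := by
    have hle : Submonoid.powers ϖB ≤ nonZeroDivisors B := by
      intro x hx
      obtain ⟨n, rfl⟩ := hx
      exact pow_mem hB n
    show Function.Injective (algebraMap B B')
    exact IsLocalization.injective B' hle
  -- the image of ϖ in B' is a unit
  have huB' : IsUnit (algebraMap A B' ϖ) := by
    have : algebraMap A B' ϖ = algebraMap B B' ϖB := rfl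
    rw [this]
    exact IsLocalization.map_units B' (⟨ϖB, Submonoid.mem_powers ϖB⟩ : Submonoid.powers ϖB)
  have hfu : ∀ y : Submonoid.powers ϖ,
      IsUnit ((IsScalarTower.toAlgHom A A B') y) := by
    rintro ⟨y, n, rfl⟩
    simpa using huB'.pow n
  -- the induced map L → B'
  set φ : L →ₐ[A] B' := IsLocalization.liftAlgHom (M := Submonoid.powers ϖ) hfu with hφ
  have hφalg : ∀ a : A, φ (algebraMap A L a) = algebraMap A B' a := fun a => φ.commutes a
  -- choice of b i with f i = b i * ϖ in B
  have hbex : ∀ i, ∃ b : B, b * ϖB = algebraMap A B (f i) := by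
    intro i
    exact Ideal.mem_span_singleton'.mp (hf i)
  choose b hb using hbex
  -- φ sends the generators into the image of B
  have hφgen : ∀ i, φ (gen i) = j (b i) := by
    intro i
    have hcancel : φ (gen i) * algebraMap A B' ϖ = j (b i) * algebraMap A B' ϖ := by
      have h1 : φ (gen i) * algebraMap A B' ϖ = φ (gen i * algebraMap A L ϖ) := by
        conv_rhs => rw [map_mul, hφalg]
      have h2 : gen i * algebraMap A L ϖ = algebraMap A L (f i) := by
        rw [hgen]
        calc algebraMap A L (f i) * Ring.inverse (algebraMap A L ϖ) * algebraMap A L ϖ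
            = algebraMap A L (f i) * (algebraMap A L ϖ * Ring.inverse (algebraMap A L ϖ)) := by
              ring
          _ = algebraMap A L (f i) := by rw [hinv, mul_one]
      have h3 : algebraMap A B' (f i) = j (b i) * algebraMap A B' ϖ := by
        have : algebraMap A B' (f i) = j (algebraMap A B (f i)) := rfl
        rw [this, ← hb i, map_mul]
        rfl
      rw [h1, h2, hφalg, h3]
    exact huB'.mul_right_cancel hcancel
  -- φ maps C into the range of j
  have hrange : ∀ x : C, φ (x : L) ∈ j.range := by
    intro x
    have hle : C ≤ Subalgebra.comap φ j.range := by
      rw [hC]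
      apply Algebra.adjoin_le
      rintro _ ⟨i, rfl⟩
      exact ⟨b i, (hφgen i).symm⟩
    exact hle x.2
  -- the desired map C → B
  set e : B ≃ₐ[A] j.range := AlgEquiv.ofInjective j hjinj with he
  set g : C →ₐ[A] B :=
    e.symm.toAlgHom.comp ((φ.comp C.val).codRestrict j.range hrange) with hg
  -- uniqueness: any two A-algebra homs C → B agree
  have huniq : ∀ g₁ g₂ : C →ₐ[A] B, g₁ = g₂ := by
    intro g₁ g₂
    have key : ∀ (g' : C →ₐ[A] B) (i : Fin r) (h : gen i ∈ C),
        ϖB * g' ⟨gen i, h⟩ = algebraMap A B (f i) := by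
      intro g' i h
      have hCmul : (algebraMap A C ϖ) * ⟨gen i, h⟩ = algebraMap A C (f i) := by
        apply Subtype.ext
        show algebraMap A L ϖ * gen i = algebraMap A L (f i)
        rw [hgen]
        calc algebraMap A L ϖ * (algebraMap A L (f i) * Ring.inverse (algebraMap A L ϖ))
            = algebraMap A L (f i) * (algebraMap A L ϖ * Ring.inverse (algebraMap A L ϖ)) := by
              ring
          _ = algebraMap A L (f i) := by rw [hinv, mul_one]
      have := congrArg g' hCmul
      rw [map_mul, g'.commutes, g'.commutes] at this
      exact this
    apply AlgHom.adjoin_ext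
    rintro _ ⟨i, rfl⟩
    rw [← mul_cancel_left_mem_nonZeroDivisors hB]
    rw [key g₁ i (Algebra.subset_adjoin ⟨i, rfl⟩), key g₂ i (Algebra.subset_adjoin ⟨i, rfl⟩)]
  exact ⟨g, trivial, fun g' _ => huniq g' g⟩
end

section
/- Let A be a commutative ring, let A⁺ ⊆ A be a subring which is integrally closed in A, and let ϖ ∈ A⁺. Then ϖ · A° ⊆ A⁺, where A° denotes the set of all x ∈ A for which there exists an integer m ≥ 1 with ϖ^m · x^n ∈ A⁺ for all n ≥ 0. -/
/-- If `A⁺` is an integrally closed subring of a commutative ring `A` and `ϖ ∈ A⁺`,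
then `ϖ · A° ⊆ A⁺`, where `A°` is the set of `x ∈ A` such that `ϖ ^ m * x ^ n ∈ A⁺`
for some `m ≥ 1` and all `n ≥ 0`. -/
theorem mul_mem_of_powerBounded
    {A : Type*} [CommRing A] (Ap : Subring A)
    (hInt : ∀ x : A, Ap.subtype.IsIntegralElem x → x ∈ Ap)
    (ϖ : A) (hϖ : ϖ ∈ Ap) (x : A)
    (hx : ∃ m : ℕ, 1 ≤ m ∧ ∀ n : ℕ, ϖ ^ m * x ^ n ∈ Ap) :
    ϖ * x ∈ Ap := by
  obtain ⟨m, hm, h⟩ := hx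
  have hc : ϖ ^ m * x ^ m ∈ Ap := h m
  apply hInt
  refine ⟨Polynomial.X ^ m - Polynomial.C ⟨_, hc⟩, ?_, ?_⟩
  · apply Polynomial.monic_X_pow_sub_C
    exact Nat.one_le_iff_ne_zero.mp hm
  · simp [Polynomial.eval₂_sub, mul_pow, sub_eq_zero]
end

section
/- Let A be a local commutative ring and let ϖ ∈ A be a non-zero-divisor. Assume that A is ϖ-valuative, i.e., every finitely generated ideal of A which contains ϖ^m for some m ≥ 1 is generated by a single element which is a non-zero-divisor. Then the image of A in the localization A[ϖ^{-1}] is integrally closed in A[ϖ^{-1}]: every element of A[ϖ^{-1}] which is integral over A lies in the image of the canonical map A → A[ϖ^{-1}]. -/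
/-- Let `A` be a local commutative ring and `ϖ ∈ A` a non-zero-divisor such that `A` is
`ϖ`-valuative: every finitely generated ideal of `A` containing some power `ϖ ^ m`
(`m ≥ 1`) is generated by a single non-zero-divisor.  Then the image of `A` is integrally
closed in `A[ϖ⁻¹]`: every element of `A[ϖ⁻¹]` integral over `A` lies in the image of
`A → A[ϖ⁻¹]`. -/
theorem valuative_image_integrallyClosed
    {A : Type*} [CommRing A] [IsLocalRing A]
    (ϖ : A) (hϖ : ϖ ∈ nonZeroDivisors A)
    (hval : ∀ I : Ideal A, I.FG → (∃ m : ℕ, 1 ≤ m ∧ ϖ ^ m ∈ I) →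
      ∃ d ∈ nonZeroDivisors A, I = Ideal.span {d})
    (x : Localization.Away ϖ) (hx : IsIntegral A x) :
    ∃ a : A, algebraMap A (Localization.Away ϖ) a = x := by
  classical
  obtain ⟨p, hmonic, hp⟩ := hx
  obtain ⟨⟨b, s⟩, hbs⟩ := IsLocalization.surj (Submonoid.powers ϖ) x
  obtain ⟨n, hn⟩ := s.2
  set k := n + 1 with hk
  have hbs' : x * algebraMap A (Localization.Away ϖ) (ϖ ^ k) =
      algebraMap A (Localization.Away ϖ) (b * ϖ) := by
    have hs : (s : A) = ϖ ^ n := hn.symm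
    rw [hk, pow_succ, map_mul, ← mul_assoc, ← hs, hbs, map_mul]
  have hunit : IsUnit (algebraMap A (Localization.Away ϖ) (ϖ ^ k)) :=
    IsLocalization.map_units (M := Submonoid.powers ϖ) _ ⟨ϖ ^ k, ⟨k, rfl⟩⟩
  obtain ⟨d, hd, hspan⟩ := hval (Ideal.span {b * ϖ, ϖ ^ k})
    (Submodule.fg_span (Set.toFinite _))
    ⟨k, Nat.le_add_left 1 n, Ideal.subset_span (by simp)⟩
  have hdvd1 : d ∣ b * ϖ := by
    rw [← Ideal.mem_span_singleton, ← hspan]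
    exact Ideal.subset_span (by simp)
  have hdvd2 : d ∣ ϖ ^ k := by
    rw [← Ideal.mem_span_singleton, ← hspan]
    exact Ideal.subset_span (by simp)
  obtain ⟨u, hu⟩ := hdvd1
  obtain ⟨v, hv⟩ := hdvd2
  have hdmem : d ∈ Ideal.span {b * ϖ, ϖ ^ k} := by
    rw [hspan]; exact Ideal.mem_span_singleton_self d
  obtain ⟨α, β, hαβ⟩ := Ideal.mem_span_pair.mp hdmem
  have hone : α * u + β * v = 1 := by
    have h : d * (α * u + β * v) = d * 1 := by
      have hr : d * (α * u + β * v) = α * (d * u) + β * (d * v) := by ring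
      rw [mul_one, hr, ← hu, ← hv, hαβ]
    exact (mul_cancel_left_mem_nonZeroDivisors hd).mp h
  rcases IsLocalRing.isUnit_or_isUnit_of_add_one hone with hiu | hiv
  · -- u is a unit: hard case, use integrality
    have hiu' : IsUnit u := isUnit_of_mul_isUnit_right hiu
    set t := v * ↑hiu'.unit⁻¹ with ht
    have htA : t * (b * ϖ) = ϖ ^ k := by
      rw [hu, hv, ht]
      calc v * ↑hiu'.unit⁻¹ * (d * u) = d * v * (u * ↑hiu'.unit⁻¹) := by ring
        _ = d * v := by rw [hiu'.mul_val_inv, mul_one]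
    have htx : algebraMap A (Localization.Away ϖ) t * x = 1 := by
      apply hunit.mul_right_cancel
      rw [one_mul, mul_assoc, hbs', ← map_mul, htA]
    set T := algebraMap A (Localization.Away ϖ) t with hT
    have hxT : x * T = 1 := by rw [mul_comm]; exact htx
    rcases Nat.eq_zero_or_pos p.natDegree with h0 | hposN
    · have hp1 : p = 1 := hmonic.natDegree_eq_zero.mp h0
      rw [hp1, Polynomial.eval₂_one] at hp
      have : Subsingleton (Localization.Away ϖ) := subsingleton_of_zero_eq_one hp.symm
      exact ⟨0, Subsingleton.elim _ _⟩
    · obtain ⟨N, hN⟩ : ∃ N, p.natDegree = N + 1 :=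
        ⟨p.natDegree - 1, (Nat.succ_pred_eq_of_pos hposN).symm⟩
      have hsum : x ^ (N + 1) =
          -(∑ i ∈ Finset.range (N + 1),
            algebraMap A (Localization.Away ϖ) (p.coeff i) * x ^ i) := by
        have hp' : Polynomial.aeval x p = 0 := hp
        have h1 := Polynomial.aeval_eq_sum_range (R := A) (p := p) x
        rw [hp', hN, Finset.sum_range_succ] at h1
        have hc : p.coeff (N + 1) = 1 := by
          have h2 := hmonic.coeff_natDegree
          rwa [hN] at h2
        rw [hc, one_smul] at h1
        simp only [Algebra.smul_def] at h1
        exact eq_neg_of_add_eq_zero_right h1.symm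
      refine ⟨-(∑ i ∈ Finset.range (N + 1), p.coeff i * t ^ (N - i)), ?_⟩
      have hTx : ∀ i ∈ Finset.range (N + 1),
          algebraMap A (Localization.Away ϖ) (p.coeff i) * x ^ i * T ^ N =
          algebraMap A (Localization.Away ϖ) (p.coeff i) * T ^ (N - i) := by
        intro i hi
        have hi' : i ≤ N := Nat.lt_succ_iff.mp (Finset.mem_range.mp hi)
        have hpow : T ^ N = T ^ i * T ^ (N - i) := by
          rw [← pow_add, Nat.add_sub_cancel' hi']
        calc algebraMap A (Localization.Away ϖ) (p.coeff i) * x ^ i * T ^ N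
            = algebraMap A (Localization.Away ϖ) (p.coeff i) *
              ((x * T) ^ i * T ^ (N - i)) := by rw [hpow, mul_pow]; ring
          _ = algebraMap A (Localization.Away ϖ) (p.coeff i) * T ^ (N - i) := by
              rw [hxT, one_pow, one_mul]
      have hxeq : x = x ^ (N + 1) * T ^ N := by
        calc x = x * (x * T) ^ N := by rw [hxT, one_pow, mul_one]
          _ = x ^ (N + 1) * T ^ N := by rw [mul_pow, pow_succ]; ring
      rw [map_neg, map_sum]
      simp only [map_mul, map_pow]
      rw [hxeq, hsum, neg_mul, Finset.sum_mul]
      exact neg_inj.mpr (Finset.sum_congr rfl hTx).symm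
  · -- v is a unit: x is already in A
    have hiv' : IsUnit v := isUnit_of_mul_isUnit_right hiv
    refine ⟨u * ↑hiv'.unit⁻¹, ?_⟩
    apply hunit.mul_right_cancel
    rw [hbs', ← map_mul]
    congr 1
    rw [hv, hu]
    calc u * ↑hiv'.unit⁻¹ * (d * v) = d * u * (v * ↑hiv'.unit⁻¹) := by ring
      _ = d * u := by rw [hiv'.mul_val_inv, mul_one]
end

section
/- Let A be a local commutative ring and let ϖ ∈ A be a non-zero-divisor. Assume that A is ϖ-valuative, i.e., every finitely generated ideal of A which contains ϖ^m for some m ≥ 1 is generated by a single element which is a non-zero-divisor. Then for every f ∈ A and every integer n ≥ 1 with f ∉ ϖ^n A, one has ϖ^n ∈ (f), the principal ideal generated by f. -/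
/-- Let `A` be a local commutative ring and `ϖ ∈ A` a non-zero-divisor such that `A` is
`ϖ`-valuative: every finitely generated ideal of `A` containing some power `ϖ ^ m`
(`m ≥ 1`) is generated by a single non-zero-divisor.  Then for every `f ∈ A` and `n ≥ 1`
with `f ∉ ϖ ^ n A`, one has `ϖ ^ n ∈ (f)`. -/
theorem valuative_pow_mem_span_of_not_mem
    {A : Type*} [CommRing A] [IsLocalRing A]
    (ϖ : A) (hϖ : ϖ ∈ nonZeroDivisors A)
    (hval : ∀ I : Ideal A, I.FG → (∃ m : ℕ, 1 ≤ m ∧ ϖ ^ m ∈ I) →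
      ∃ d ∈ nonZeroDivisors A, I = Ideal.span {d})
    (f : A) (n : ℕ) (hn : 1 ≤ n) (hf : f ∉ Ideal.span {ϖ ^ n}) :
    ϖ ^ n ∈ Ideal.span {f} := by
  set I : Ideal A := Ideal.span {f, ϖ ^ n} with hI
  obtain ⟨d, hd, hId⟩ := hval I (Submodule.fg_span (Set.toFinite _))
    ⟨n, hn, Ideal.subset_span (by simp)⟩
  have hfI : f ∈ Ideal.span {d} := hId ▸ Ideal.subset_span (by simp)
  have hϖI : ϖ ^ n ∈ Ideal.span {d} := hId ▸ Ideal.subset_span (by simp)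
  obtain ⟨a, ha⟩ := Ideal.mem_span_singleton'.mp hfI
  obtain ⟨b, hb⟩ := Ideal.mem_span_singleton'.mp hϖI
  have hdI : d ∈ I := hId ▸ Ideal.subset_span rfl
  rw [hI, Ideal.span_insert, Ideal.mem_span_singleton_sup] at hdI
  obtain ⟨x, y, hy, hxy⟩ := hdI
  obtain ⟨z, hz⟩ := Ideal.mem_span_singleton'.mp hy
  have key : (x * a + z * b) * d = 1 * d := by
    rw [one_mul, add_mul, mul_assoc, mul_assoc, ha, hb, hz, hxy]
  have h1 : x * a + z * b = 1 := (mul_cancel_right_mem_nonZeroDivisors hd).mp key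
  rcases IsLocalRing.isUnit_or_isUnit_of_add_one h1 with h | h
  · -- x * a is a unit, so a is a unit, so ϖ^n ∈ (d) = (f)
    have ha' : IsUnit a := isUnit_of_mul_isUnit_right h
    have : Ideal.span {d} = Ideal.span {f} := by
      rw [← ha]
      exact (Ideal.span_singleton_mul_left_unit ha' d).symm
    exact this ▸ hϖI
  · -- z * b unit, so b unit, so f ∈ (d) = (ϖ^n), contradiction
    exfalso
    have hb' : IsUnit b := isUnit_of_mul_isUnit_right h
    have : Ideal.span {d} = Ideal.span {ϖ ^ n} := by
      rw [← hb]
      exact (Ideal.span_singleton_mul_left_unit hb' d).symm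
    exact hf (this ▸ hfI)
end

section
/- Let A be a local commutative ring and let ϖ ∈ A be a non-zero-divisor which is not a unit. Assume that A is ϖ-valuative, i.e., every finitely generated ideal of A which contains ϖ^m for some m ≥ 1 is generated by a single element which is a non-zero-divisor. Then the quotient ring O = A/⋂_{n ≥ 1} ϖ^n A is a valuation ring: O is a nonzero local integral domain in which, for any two elements a, b ∈ O, either a divides b or b divides a. -/
/-- Let `A` be a local commutative ring and `ϖ ∈ A` a non-zero-divisor which is not a
unit, such that `A` is `ϖ`-valuative: every finitely generated ideal of `A` containing
some power `ϖ ^ m` (`m ≥ 1`) is generated by a single non-zero-divisor.  Then the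
`ϖ`-adic Hausdorff quotient `O = A / ⋂_{n ≥ 1} ϖ ^ n A` is a valuation ring: a nonzero
local integral domain in which, for any two elements, one divides the other. -/
theorem valuative_hausdorffQuotient_valuationRing
    {A : Type*} [CommRing A] [IsLocalRing A]
    (ϖ : A) (hϖ : ϖ ∈ nonZeroDivisors A) (hϖu : ¬ IsUnit ϖ)
    (hval : ∀ I : Ideal A, I.FG → (∃ m : ℕ, 1 ≤ m ∧ ϖ ^ m ∈ I) →
      ∃ d ∈ nonZeroDivisors A, I = Ideal.span {d}) :
    Nontrivial (A ⧸ (⨅ n : ℕ, Ideal.span {ϖ ^ (n + 1)})) ∧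
    IsLocalRing (A ⧸ (⨅ n : ℕ, Ideal.span {ϖ ^ (n + 1)})) ∧
    IsDomain (A ⧸ (⨅ n : ℕ, Ideal.span {ϖ ^ (n + 1)})) ∧
    ∀ a b : A ⧸ (⨅ n : ℕ, Ideal.span {ϖ ^ (n + 1)}), a ∣ b ∨ b ∣ a := by
  set J : Ideal A := ⨅ n : ℕ, Ideal.span {ϖ ^ (n + 1)} with hJdef
  -- Key lemma: for every `a` and `m ≥ 1`, either `a ∣ ϖ ^ m` or `a ∈ (ϖ ^ m)`.
  have key : ∀ a : A, ∀ m : ℕ, 1 ≤ m → a ∣ ϖ ^ m ∨ a ∈ Ideal.span {ϖ ^ m} := by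
    intro a m hm
    obtain ⟨d, hd, hId⟩ := hval (Ideal.span {a, ϖ ^ m})
      (Submodule.fg_span ((Set.finite_singleton _).insert a))
      ⟨m, hm, Ideal.subset_span (Set.mem_insert_of_mem _ rfl)⟩
    have hda : d ∣ a := by
      have : a ∈ Ideal.span {d} := hId ▸ Ideal.subset_span (Set.mem_insert _ _)
      exact (Ideal.mem_span_singleton).1 this
    have hdw : d ∣ ϖ ^ m := by
      have : ϖ ^ m ∈ Ideal.span {d} :=
        hId ▸ Ideal.subset_span (Set.mem_insert_of_mem _ rfl)
      exact (Ideal.mem_span_singleton).1 this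
    obtain ⟨a₁, ha₁⟩ := hda
    have hdmem : d ∈ Ideal.span {a, ϖ ^ m} := by
      rw [hId]; exact Ideal.subset_span rfl
    obtain ⟨r, s, hrs⟩ := Ideal.mem_span_pair.1 hdmem
    have hkey : d * (1 - r * a₁) = s * ϖ ^ m := by
      rw [ha₁] at hrs; linear_combination -hrs
    by_cases hu : IsUnit (r * a₁)
    · left
      have ha' : IsUnit a₁ := isUnit_of_mul_isUnit_right hu
      obtain ⟨a₂, ha₂⟩ := ha'.exists_right_inv
      have : d = a * a₂ := by rw [ha₁]; rw [mul_assoc, ha₂, mul_one]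
      exact dvd_trans ⟨a₂, this⟩ hdw
    · right
      have hun : IsUnit (1 - r * a₁) :=
        IsLocalRing.isUnit_one_sub_self_of_mem_nonunits _ hu
      obtain ⟨v, hv⟩ := hun.exists_right_inv
      have hwd : ϖ ^ m ∣ d := by
        refine ⟨s * v, ?_⟩
        calc d = d * ((1 - r * a₁) * v) := by rw [hv, mul_one]
          _ = (d * (1 - r * a₁)) * v := by ring
          _ = s * ϖ ^ m * v := by rw [hkey]
          _ = ϖ ^ m * (s * v) := by ring
      rw [Ideal.mem_span_singleton]
      exact dvd_trans hwd ⟨a₁, ha₁⟩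
  have hJle : ∀ n : ℕ, J ≤ Ideal.span {ϖ ^ (n + 1)} := fun n => iInf_le _ n
  -- every element not in J divides a power of ϖ
  have hdvd_of_notJ : ∀ a : A, a ∉ J → ∃ m : ℕ, 1 ≤ m ∧ a ∣ ϖ ^ m := by
    intro a ha
    rw [hJdef, Ideal.mem_iInf] at ha
    push_neg at ha
    obtain ⟨n, hn⟩ := ha
    rcases key a (n + 1) (Nat.succ_le_succ (Nat.zero_le n)) with h | h
    · exact ⟨n + 1, Nat.succ_le_succ (Nat.zero_le n), h⟩
    · exact absurd h hn
  have hJtop : J ≠ ⊤ := by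
    intro h
    have h1 : (1 : A) ∈ Ideal.span {ϖ ^ (0 + 1)} := hJle 0 (h ▸ Submodule.mem_top)
    rw [Ideal.mem_span_singleton, pow_one] at h1
    exact hϖu (isUnit_of_dvd_one h1)
  have hnontriv : Nontrivial (A ⧸ J) := Ideal.Quotient.nontrivial_iff.mpr hJtop
  haveI := hnontriv
  have hloc : IsLocalRing (A ⧸ J) :=
    IsLocalRing.of_surjective' (Ideal.Quotient.mk J) Ideal.Quotient.mk_surjective
  have hnzd_pow : ∀ k : ℕ, ϖ ^ k ∈ nonZeroDivisors A := fun k => pow_mem hϖ k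
  -- no zero divisors
  have hnzdO : ∀ x y : A ⧸ J, x * y = 0 → x = 0 ∨ y = 0 := by
    intro x y hxy
    obtain ⟨a, rfl⟩ := Ideal.Quotient.mk_surjective x
    obtain ⟨b, rfl⟩ := Ideal.Quotient.mk_surjective y
    rw [← map_mul, Ideal.Quotient.eq_zero_iff_mem] at hxy
    by_cases ha : a ∈ J
    · exact Or.inl (Ideal.Quotient.eq_zero_iff_mem.2 ha)
    by_cases hb : b ∈ J
    · exact Or.inr (Ideal.Quotient.eq_zero_iff_mem.2 hb)
    exfalso
    obtain ⟨m, hm, c, hc⟩ := hdvd_of_notJ a ha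
    obtain ⟨k, hk, e, he⟩ := hdvd_of_notJ b hb
    have hmem : ϖ ^ (m + k) ∈ J := by
      have : ϖ ^ (m + k) = (a * b) * (c * e) := by
        rw [pow_add, hc, he]; ring
      rw [this]
      exact J.mul_mem_right _ hxy
    have := hJle (m + k) hmem
    rw [Ideal.mem_span_singleton] at this
    obtain ⟨t, ht⟩ := this
    apply hϖu
    refine IsUnit.of_mul_eq_one (a := ϖ) t ?_
    have hcancel : ϖ ^ (m + k) * (ϖ * t) = ϖ ^ (m + k) * 1 := by
      rw [mul_one]
      calc ϖ ^ (m + k) * (ϖ * t) = ϖ ^ (m + k + 1) * t := by ring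
        _ = ϖ ^ (m + k) := ht.symm
    exact ((mul_cancel_left_mem_nonZeroDivisors (hnzd_pow (m + k))).1 hcancel)
  haveI : NoZeroDivisors (A ⧸ J) := ⟨fun h => hnzdO _ _ h⟩
  have hdom : IsDomain (A ⧸ J) := NoZeroDivisors.to_isDomain _
  refine ⟨hnontriv, hloc, hdom, ?_⟩
  -- divisibility
  intro x y
  obtain ⟨a, rfl⟩ := Ideal.Quotient.mk_surjective x
  obtain ⟨b, rfl⟩ := Ideal.Quotient.mk_surjective y
  by_cases ha : a ∈ J
  · exact Or.inr ⟨0, by rw [Ideal.Quotient.eq_zero_iff_mem.2 ha, mul_zero]⟩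
  by_cases hb : b ∈ J
  · exact Or.inl ⟨0, by rw [Ideal.Quotient.eq_zero_iff_mem.2 hb, mul_zero]⟩
  obtain ⟨m, hm, c, hc⟩ := hdvd_of_notJ a ha
  obtain ⟨d, hd, hId⟩ := hval (Ideal.span {a, b})
    (Submodule.fg_span ((Set.finite_singleton _).insert a))
    ⟨m, hm, by
      rw [hc]
      exact Ideal.mul_mem_right _ _ (Ideal.subset_span (Set.mem_insert _ _))⟩
  have hda : d ∣ a := (Ideal.mem_span_singleton).1
    (hId ▸ Ideal.subset_span (Set.mem_insert _ _))
  have hdb : d ∣ b := (Ideal.mem_span_singleton).1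
    (hId ▸ Ideal.subset_span (Set.mem_insert_of_mem _ rfl))
  obtain ⟨a₁, ha₁⟩ := hda
  obtain ⟨b₁, hb₁⟩ := hdb
  have hdmem : d ∈ Ideal.span {a, b} := by rw [hId]; exact Ideal.subset_span rfl
  obtain ⟨r, s, hrs⟩ := Ideal.mem_span_pair.1 hdmem
  have hone : r * a₁ + s * b₁ = 1 := by
    have hc2 : d * (r * a₁ + s * b₁) = d * 1 := by
      rw [ha₁, hb₁] at hrs
      linear_combination hrs
    exact (mul_cancel_left_mem_nonZeroDivisors hd).1 hc2
  rcases IsLocalRing.isUnit_or_isUnit_of_add_one hone with hu | hu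
  · left
    have ha' : IsUnit a₁ := isUnit_of_mul_isUnit_right hu
    obtain ⟨a₂, ha₂⟩ := ha'.exists_right_inv
    have hadvd : a ∣ b := by
      refine dvd_trans ⟨a₂, ?_⟩ ⟨b₁, hb₁⟩
      rw [ha₁, mul_assoc, ha₂, mul_one]
    exact map_dvd (Ideal.Quotient.mk J) hadvd
  · right
    have hb' : IsUnit b₁ := isUnit_of_mul_isUnit_right hu
    obtain ⟨b₂, hb₂⟩ := hb'.exists_right_inv
    have hbdvd : b ∣ a := by
      refine dvd_trans ⟨b₂, ?_⟩ ⟨a₁, ha₁⟩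
      rw [hb₁, mul_assoc, hb₂, mul_one]
    exact map_dvd (Ideal.Quotient.mk J) hbdvd
end
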